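/- Let ρ_α = (1/(n² − αn))(I − αS) ∈ M_n ⊗ M_n be the Werner state with parameter α ∈ [−1,1], where S is the swap operator. Then ‖ρ_α‖_{S(1)} = (1 + |min{α,0}|)/(n(n−α)), and for 2 ≤ k ≤ n, ‖ρ_α‖_{S(k)} = (1 + |α|)/(n(n−α)). -/

import Mathlib

/-!
Since the swap `S` is a self-adjoint unitary and `|α| ≤ 1`, the matrix `I - αS` is positive
semidefinite. The Cauchy–Schwarz inequality for the form `⟨w|ρ_α|v⟩` then shows that the
supremum over pairs `(v, w)` defining `Snorm` is attained on the diagonal `v = w`, where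
`⟨v|ρ_α|v⟩ = (1 - α⟨v|S|v⟩) / (n(n - α))` for unit `v`. In general `⟨v|S|v⟩ ∈ [-1, 1]`, and for a
product vector `a ⊗ b` it equals `|⟨a|b⟩|² ∈ [0, 1]`. The extreme values are attained by
`e_i ⊗ e_i`, `e_i ⊗ e_j` and, at Schmidt rank two, by the singlet `(e_i ⊗ e_j - e_j ⊗ e_i)/√2`.
-/

open scoped BigOperators

noncomputable section

/-- Elementary tensor of two vectors. -/
def tens {m n : ℕ} (a : Fin m → ℂ) (b : Fin n → ℂ) : Fin m × Fin n → ℂ :=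
  fun p => a p.1 * b p.2

/-- Inner product `⟨w|v⟩`, conjugate-linear in the first argument. -/
def ip {ι : Type} [Fintype ι] (w v : ι → ℂ) : ℂ :=
  ∑ i, (starRingEnd ℂ) (w i) * v i

/-- Euclidean norm. -/
def nrm {ι : Type} [Fintype ι] (v : ι → ℂ) : ℝ :=
  Real.sqrt (∑ i, Complex.normSq (v i))

/-- Schmidt rank at most `k`: `v` is a sum of `k` elementary tensors. -/
def SRle {m n : ℕ} (k : ℕ) (v : Fin m × Fin n → ℂ) : Prop :=
  ∃ (a : Fin k → Fin m → ℂ) (b : Fin k → Fin n → ℂ),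
    v = fun p => ∑ l, a l p.1 * b l p.2

/-- The `s(k)`-vector norm. -/
def snorm {m n : ℕ} (k : ℕ) (v : Fin m × Fin n → ℂ) : ℝ :=
  sSup { r : ℝ | ∃ w : Fin m × Fin n → ℂ, nrm w = 1 ∧ SRle k w ∧ r = ‖ip w v‖ }

/-- The `S(k)`-operator norm. -/
def Snorm {m n : ℕ} (k : ℕ) (X : Matrix (Fin m × Fin n) (Fin m × Fin n) ℂ) : ℝ :=
  sSup { r : ℝ | ∃ v w : Fin m × Fin n → ℂ, nrm v = 1 ∧ nrm w = 1 ∧ SRle k v ∧ SRle k w ∧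
    r = ‖ip w (X.mulVec v)‖ }

/-- `k`-block positivity: `⟨v|X|v⟩ ≥ 0` for all unit vectors of Schmidt rank at most `k`. -/
def kBlockPos {m n : ℕ} (k : ℕ) (X : Matrix (Fin m × Fin n) (Fin m × Fin n) ℂ) : Prop :=
  ∀ v : Fin m × Fin n → ℂ, nrm v = 1 → SRle k v → 0 ≤ (ip v (X.mulVec v)).re

/-- The swap operator `S(|i⟩⊗|j⟩) = |j⟩⊗|i⟩` on `ℂ^n ⊗ ℂ^n`. -/
def swapMat (n : ℕ) : Matrix (Fin n × Fin n) (Fin n × Fin n) ℂ :=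
  Matrix.of fun p q => if p.1 = q.2 ∧ p.2 = q.1 then 1 else 0

/-- The Werner state `ρ_α = (1/(n² − αn))(I − αS) ∈ M_n ⊗ M_n`. -/
def werner (n : ℕ) (α : ℝ) : Matrix (Fin n × Fin n) (Fin n × Fin n) ℂ :=
  ((1 / ((n : ℝ) ^ 2 - α * n) : ℝ) : ℂ) •
    ((1 : Matrix (Fin n × Fin n) (Fin n × Fin n) ℂ) - (α : ℂ) • swapMat n)

open Matrix
open scoped ComplexOrder

theorem Matrix.PosSemidef.norm_dotProduct_mulVec_sq_le {𝕜 ι : Type*} [RCLike 𝕜] [Fintype ι]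
    {M : Matrix ι ι 𝕜} (hM : M.PosSemidef) (w v : ι → 𝕜) :
    ‖star w ⬝ᵥ (M *ᵥ v)‖ ^ 2 ≤
      RCLike.re (star w ⬝ᵥ (M *ᵥ w)) * RCLike.re (star v ⬝ᵥ (M *ᵥ v)) := by
  let := M.toSeminormedAddCommGroup hM
  let := M.toInnerProductSpace hM
  have hinner : ∀ x y : ι → 𝕜, inner 𝕜 x y = star x ⬝ᵥ (M *ᵥ y) :=
    fun x y => dotProduct_comm _ _
  have h := inner_mul_inner_self_le (𝕜 := 𝕜) w v
  rw [hinner, hinner, hinner, hinner, ← hinner v w, norm_inner_symm, hinner] at h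
  rwa [sq]

section InnerProduct

variable {ι : Type} [Fintype ι]

lemma ip_eq_star_dotProduct (w v : ι → ℂ) : ip w v = star w ⬝ᵥ v := rfl

lemma re_ip_self (v : ι → ℂ) : (ip v v).re = ∑ i, Complex.normSq (v i) := by
  simp [ip, Complex.re_sum, Complex.normSq_apply]

lemma nrm_sq (v : ι → ℂ) : nrm v ^ 2 = (ip v v).re := by
  rw [nrm, re_ip_self, Real.sq_sqrt (Finset.sum_nonneg fun i _ => Complex.normSq_nonneg _)]

lemma nrm_eq_one_of_ip_self_eq_one {v : ι → ℂ} (h : ip v v = 1) : nrm v = 1 := by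
  rw [nrm, ← re_ip_self, h, Complex.one_re, Real.sqrt_one]

lemma norm_ip_le (w v : ι → ℂ) : ‖ip w v‖ ≤ nrm w * nrm v := by
  have h := norm_inner_le_norm (𝕜 := ℂ) (WithLp.toLp 2 w) (WithLp.toLp 2 v)
  rw [EuclideanSpace.inner_toLp_toLp, dotProduct_comm, EuclideanSpace.norm_eq,
    EuclideanSpace.norm_eq] at h
  simpa [ip_eq_star_dotProduct, nrm, Complex.normSq_eq_norm_sq] using h

lemma ip_conj_symm (w v : ι → ℂ) : starRingEnd ℂ (ip v w) = ip w v := by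
  simp only [ip, map_sum, map_mul, Complex.conj_conj, mul_comm]

lemma ip_single_single [DecidableEq ι] (i j : ι) :
    ip (Pi.single i (1 : ℂ)) (Pi.single j 1) = if i = j then 1 else 0 := by
  simp [ip_eq_star_dotProduct, Pi.single_apply, eq_comm]

end InnerProduct

section SchmidtRank

variable {m n : ℕ}

lemma ip_tens (a c : Fin m → ℂ) (b d : Fin n → ℂ) :
    ip (tens a b) (tens c d) = ip a c * ip b d := by
  simp only [ip, tens, Finset.sum_mul_sum, Fintype.sum_prod_type, map_mul]
  exact Finset.sum_congr rfl fun i _ => Finset.sum_congr rfl fun j _ => by ring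

lemma SRle_one_tens (a : Fin m → ℂ) (b : Fin n → ℂ) : SRle 1 (tens a b) :=
  ⟨fun _ => a, fun _ => b, by ext p; simp [tens]⟩

lemma SRle.exists_eq_tens {v : Fin m × Fin n → ℂ} (hv : SRle 1 v) :
    ∃ a b, v = tens a b := by
  obtain ⟨a, b, rfl⟩ := hv
  exact ⟨a 0, b 0, by ext p; simp [tens]⟩

lemma SRle_zero (k : ℕ) : SRle k (0 : Fin m × Fin n → ℂ) :=
  ⟨0, 0, by ext; simp⟩

lemma SRle.add {k l : ℕ} {v w : Fin m × Fin n → ℂ} (hv : SRle k v) (hw : SRle l w) :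
    SRle (k + l) (v + w) := by
  obtain ⟨a, b, rfl⟩ := hv
  obtain ⟨c, d, rfl⟩ := hw
  exact ⟨Fin.append a c, Fin.append b d, by ext p; simp [Fin.sum_univ_add]⟩

lemma SRle.smul {k : ℕ} {v : Fin m × Fin n → ℂ} (hv : SRle k v) (c : ℂ) : SRle k (c • v) := by
  obtain ⟨a, b, rfl⟩ := hv
  exact ⟨fun l => c • a l, b, by ext p; simp [Finset.mul_sum, mul_assoc]⟩

lemma SRle.mono {k l : ℕ} {v : Fin m × Fin n → ℂ} (hv : SRle k v) (hkl : k ≤ l) : SRle l v := by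
  obtain ⟨d, rfl⟩ := Nat.exists_eq_add_of_le hkl
  simpa using hv.add (SRle_zero d)

end SchmidtRank

theorem Snorm_eq_of_posSemidef {m n k : ℕ} {X : Matrix (Fin m × Fin n) (Fin m × Fin n) ℂ}
    (hX : X.PosSemidef) {M : ℝ}
    (hle : ∀ v, nrm v = 1 → SRle k v → (ip v (X *ᵥ v)).re ≤ M)
    (hatt : ∃ v, nrm v = 1 ∧ SRle k v ∧ (ip v (X *ᵥ v)).re = M) :
    Snorm k X = M := by
  obtain ⟨v₀, hv₀, hsr₀, rfl⟩ := hatt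
  have hquad_nonneg : ∀ v, 0 ≤ (ip v (X *ᵥ v)).re := hX.re_dotProduct_nonneg
  have hbound : ∀ r ∈ {r : ℝ | ∃ v w : Fin m × Fin n → ℂ, nrm v = 1 ∧ nrm w = 1 ∧
      SRle k v ∧ SRle k w ∧ r = ‖ip w (X *ᵥ v)‖}, r ≤ (ip v₀ (X *ᵥ v₀)).re := by
    rintro r ⟨v, w, hv, hw, hsv, hsw, rfl⟩
    refine (pow_le_pow_iff_left₀ (norm_nonneg _) (hquad_nonneg v₀) two_ne_zero).mp ?_
    calc ‖ip w (X *ᵥ v)‖ ^ 2 ≤ (ip w (X *ᵥ w)).re * (ip v (X *ᵥ v)).re :=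
          hX.norm_dotProduct_mulVec_sq_le w v
      _ ≤ (ip v₀ (X *ᵥ v₀)).re ^ 2 := by
          rw [sq]
          exact mul_le_mul (hle w hw hsw) (hle v hv hsv) (hquad_nonneg v) (hquad_nonneg v₀)
  refine le_antisymm (Real.sSup_le hbound (hquad_nonneg v₀)) (le_csSup ⟨_, hbound⟩ ?_)
  refine ⟨v₀, v₀, hv₀, hv₀, hsr₀, hsr₀, ?_⟩
  exact congrArg Complex.re (Complex.eq_coe_norm_of_nonneg (hX.dotProduct_mulVec_nonneg v₀))

section Swap

variable {n : ℕ}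

lemma swapMat_mulVec (v : Fin n × Fin n → ℂ) : swapMat n *ᵥ v = v ∘ Prod.swap := by
  ext p
  rw [mulVec, dotProduct, Finset.sum_eq_single p.swap]
  · simp [swapMat]
  · rintro q - hq
    simp only [swapMat, of_apply]
    rw [if_neg (fun h => hq (Prod.ext h.2.symm h.1.symm)), zero_mul]
  · simp

lemma swapMat_isHermitian (n : ℕ) : (swapMat n).IsHermitian := by
  ext p q
  simp only [conjTranspose_apply, swapMat, of_apply]
  split_ifs <;> simp_all [eq_comm]

lemma tens_comp_swap (a b : Fin n → ℂ) : tens a b ∘ Prod.swap = tens b a := by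
  ext p; simp [tens, mul_comm]

lemma nrm_comp_swap (v : Fin n × Fin n → ℂ) : nrm (v ∘ Prod.swap) = nrm v := by
  simp only [nrm, Function.comp_apply]
  congr 1
  exact Fintype.sum_equiv (Equiv.prodComm _ _) _ _ fun _ => rfl

lemma abs_re_ip_swapMat_mulVec_le (v : Fin n × Fin n → ℂ) :
    |(ip v (swapMat n *ᵥ v)).re| ≤ nrm v ^ 2 :=
  calc |(ip v (swapMat n *ᵥ v)).re| ≤ ‖ip v (swapMat n *ᵥ v)‖ := Complex.abs_re_le_norm _
    _ ≤ nrm v * nrm (swapMat n *ᵥ v) := norm_ip_le _ _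
    _ = nrm v ^ 2 := by rw [swapMat_mulVec, nrm_comp_swap, sq]

lemma abs_re_ip_swapMat_mulVec_le_one {v : Fin n × Fin n → ℂ} (hv : nrm v = 1) :
    |(ip v (swapMat n *ᵥ v)).re| ≤ 1 := by
  simpa [hv] using abs_re_ip_swapMat_mulVec_le v

lemma re_ip_swapMat_mulVec_tens (a b : Fin n → ℂ) :
    (ip (tens a b) (swapMat n *ᵥ tens a b)).re = ‖ip a b‖ ^ 2 := by
  rw [swapMat_mulVec, tens_comp_swap, ip_tens, ← ip_conj_symm b a, Complex.mul_conj,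
    Complex.ofReal_re, Complex.normSq_eq_norm_sq]

lemma SRle.re_ip_swapMat_mulVec_nonneg {v : Fin n × Fin n → ℂ} (hv : SRle 1 v) :
    0 ≤ (ip v (swapMat n *ᵥ v)).re := by
  obtain ⟨a, b, rfl⟩ := hv.exists_eq_tens
  rw [re_ip_swapMat_mulVec_tens]
  positivity

end Swap

section Werner

variable {n : ℕ} {α : ℝ}

lemma re_ip_one_sub_smul_swapMat_mulVec (v : Fin n × Fin n → ℂ) :
    (ip v ((1 - (α : ℂ) • swapMat n) *ᵥ v)).re = nrm v ^ 2 - α * (ip v (swapMat n *ᵥ v)).re := by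
  simp [ip_eq_star_dotProduct, sub_mulVec, smul_mulVec, dotProduct_sub, nrm_sq]

lemma one_sub_smul_swapMat_posSemidef (hα1 : -1 ≤ α) (hα2 : α ≤ 1) :
    (1 - (α : ℂ) • swapMat n).PosSemidef := by
  have hH : (1 - (α : ℂ) • swapMat n).IsHermitian :=
    isHermitian_one.sub ((swapMat_isHermitian n).smul (Complex.conj_ofReal α))
  refine .of_dotProduct_mulVec_nonneg hH fun v => ?_
  refine Complex.nonneg_iff.mpr ⟨?_, (hH.im_star_dotProduct_mulVec_self v).symm⟩
  rw [← ip_eq_star_dotProduct, re_ip_one_sub_smul_swapMat_mulVec]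
  have hα : |α| ≤ 1 := abs_le.mpr ⟨hα1, hα2⟩
  have : α * (ip v (swapMat n *ᵥ v)).re ≤ nrm v ^ 2 :=
    calc α * (ip v (swapMat n *ᵥ v)).re ≤ |α| * |(ip v (swapMat n *ᵥ v)).re| :=
          (le_abs_self _).trans (abs_mul _ _).le
      _ ≤ 1 * nrm v ^ 2 := mul_le_mul hα (abs_re_ip_swapMat_mulVec_le v) (abs_nonneg _) zero_le_one
      _ = nrm v ^ 2 := one_mul _
  linarith

lemma natCast_mul_sub_nonneg (hα : α ≤ 1) : 0 ≤ (n : ℝ) * (n - α) := by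
  rcases Nat.eq_zero_or_pos n with rfl | hn
  · simp
  · have : (1 : ℝ) ≤ n := by exact_mod_cast hn
    exact mul_nonneg (by positivity) (by linarith)

lemma werner_posSemidef (hα1 : -1 ≤ α) (hα2 : α ≤ 1) : (werner n α).PosSemidef := by
  refine (one_sub_smul_swapMat_posSemidef hα1 hα2).smul (Complex.zero_le_real.mpr ?_)
  have := natCast_mul_sub_nonneg (n := n) hα2
  exact one_div_nonneg.mpr (by linarith)

lemma re_ip_werner_mulVec (v : Fin n × Fin n → ℂ) :
    (ip v (werner n α *ᵥ v)).re =
      (nrm v ^ 2 - α * (ip v (swapMat n *ᵥ v)).re) / (n * (n - α)) := by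
  rw [werner, smul_mulVec, ip_eq_star_dotProduct, dotProduct_smul, ← ip_eq_star_dotProduct,
    smul_eq_mul, Complex.re_ofReal_mul, re_ip_one_sub_smul_swapMat_mulVec]
  ring

theorem Snorm_werner_eq (hα1 : -1 ≤ α) (hα2 : α ≤ 1) {k : ℕ} {B : ℝ}
    (hle : ∀ v, nrm v = 1 → SRle k v → -(α * (ip v (swapMat n *ᵥ v)).re) ≤ B)
    (hatt : ∃ v, nrm v = 1 ∧ SRle k v ∧ -(α * (ip v (swapMat n *ᵥ v)).re) = B) :
    Snorm k (werner n α) = (1 + B) / (n * (n - α)) := by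
  refine Snorm_eq_of_posSemidef (werner_posSemidef hα1 hα2) (fun v hv hsr => ?_) ?_
  · rw [re_ip_werner_mulVec, hv, one_pow]
    exact div_le_div_of_nonneg_right (by linarith [hle v hv hsr]) (natCast_mul_sub_nonneg hα2)
  · obtain ⟨v, hv, hsr, hB⟩ := hatt
    refine ⟨v, hv, hsr, ?_⟩
    rw [re_ip_werner_mulVec, hv, one_pow, ← hB, sub_eq_add_neg]

end Werner

section Witnesses

variable {n : ℕ}

lemma nrm_tens_single (i j : Fin n) : nrm (tens (Pi.single i 1) (Pi.single j 1)) = 1 :=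
  nrm_eq_one_of_ip_self_eq_one (by simp [ip_tens, ip_single_single])

lemma re_ip_swapMat_mulVec_tens_single (i j : Fin n) :
    (ip (tens (Pi.single i 1) (Pi.single j 1))
      (swapMat n *ᵥ tens (Pi.single i 1) (Pi.single j 1))).re = if i = j then 1 else 0 := by
  rw [re_ip_swapMat_mulVec_tens, ip_single_single]
  split_ifs <;> simp

def singlet (i j : Fin n) : Fin n × Fin n → ℂ :=
  ((√2)⁻¹ : ℂ) • (tens (Pi.single i 1) (Pi.single j 1) - tens (Pi.single j 1) (Pi.single i 1))

lemma SRle_two_singlet (i j : Fin n) : SRle 2 (singlet i j) := by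
  have h := ((SRle_one_tens (Pi.single i 1) (Pi.single j 1)).add
    ((SRle_one_tens (Pi.single j 1) (Pi.single i 1)).smul (-1))).smul ((√2)⁻¹ : ℂ)
  rwa [neg_one_smul, ← sub_eq_add_neg] at h

lemma singlet_comp_swap (i j : Fin n) : singlet i j ∘ Prod.swap = -singlet i j := by
  ext p; simp [singlet, tens]; ring

lemma nrm_singlet {i j : Fin n} (hij : i ≠ j) : nrm (singlet i j) = 1 := by
  refine nrm_eq_one_of_ip_self_eq_one ?_
  rw [singlet, ip_eq_star_dotProduct, star_smul, smul_dotProduct, dotProduct_smul, star_sub,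
    sub_dotProduct, dotProduct_sub, dotProduct_sub]
  simp only [← ip_eq_star_dotProduct, ip_tens, ip_single_single, if_neg hij, if_neg hij.symm]
  simp only [if_true, mul_one, mul_zero, sub_zero, zero_sub, sub_neg_eq_add, smul_eq_mul,
    star_inv₀, Complex.star_def, Complex.conj_ofReal]
  rw [← mul_assoc, ← mul_inv, ← Complex.ofReal_mul, Real.mul_self_sqrt zero_le_two]
  norm_num

lemma re_ip_swapMat_mulVec_singlet {i j : Fin n} (hij : i ≠ j) :
    (ip (singlet i j) (swapMat n *ᵥ singlet i j)).re = -1 := by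
  rw [swapMat_mulVec, singlet_comp_swap, ip_eq_star_dotProduct, dotProduct_neg,
    ← ip_eq_star_dotProduct, Complex.neg_re, ← nrm_sq, nrm_singlet hij, one_pow]

end Witnesses

lemma neg_mul_le_abs_min_zero {α t : ℝ} (h0 : 0 ≤ t) (h1 : t ≤ 1) : -(α * t) ≤ |min α 0| := by
  rcases le_or_gt 0 α with hα | hα
  · rw [min_eq_right hα, abs_zero]
    nlinarith
  · rw [min_eq_left hα.le, abs_of_neg hα]
    nlinarith

lemma neg_mul_le_abs {α t : ℝ} (ht : |t| ≤ 1) : -(α * t) ≤ |α| :=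
  calc -(α * t) ≤ |α| * |t| := (neg_le_abs _).trans (abs_mul α t).le
    _ ≤ |α| := mul_le_of_le_one_right (abs_nonneg α) ht

/-- For the Werner state `ρ_α ∈ M_n ⊗ M_n` with `α ∈ [−1,1]`:
`‖ρ_α‖_{S(1)} = (1 + |min{α,0}|)/(n(n−α))`, and for `2 ≤ k ≤ n`,
`‖ρ_α‖_{S(k)} = (1 + |α|)/(n(n−α))`. -/
theorem werner_Snorm (n : ℕ) (hn : 2 ≤ n) (α : ℝ) (hα1 : -1 ≤ α) (hα2 : α ≤ 1) :
    Snorm 1 (werner n α) = (1 + |min α 0|) / ((n : ℝ) * ((n : ℝ) - α)) ∧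
    ∀ k : ℕ, 2 ≤ k → k ≤ n →
      Snorm k (werner n α) = (1 + |α|) / ((n : ℝ) * ((n : ℝ) - α)) := by
  obtain ⟨i, j, hij⟩ : ∃ i j : Fin n, i ≠ j := ⟨⟨0, by omega⟩, ⟨1, by omega⟩, by simp⟩
  have hdiag := re_ip_swapMat_mulVec_tens_single i i
  have hoff := re_ip_swapMat_mulVec_tens_single i j
  rw [if_pos rfl] at hdiag
  rw [if_neg hij] at hoff
  refine ⟨Snorm_werner_eq hα1 hα2 (fun v hv hsr => ?_) ?_,
    fun k hk _ => Snorm_werner_eq hα1 hα2 (fun v hv _ => ?_) ?_⟩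
  · exact neg_mul_le_abs_min_zero hsr.re_ip_swapMat_mulVec_nonneg
      (abs_le.mp (abs_re_ip_swapMat_mulVec_le_one hv)).2
  · rcases le_or_gt 0 α with hα | hα
    · exact ⟨_, nrm_tens_single i j, SRle_one_tens _ _, by simp [hoff, hα]⟩
    · exact ⟨_, nrm_tens_single i i, SRle_one_tens _ _, by simp [hdiag, hα.le, abs_of_neg hα]⟩
  · exact neg_mul_le_abs (abs_re_ip_swapMat_mulVec_le_one hv)
  · rcases le_or_gt 0 α with hα | hα
    · exact ⟨_, nrm_singlet hij, (SRle_two_singlet i j).mono hk,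
        by simp [re_ip_swapMat_mulVec_singlet hij, abs_of_nonneg hα]⟩
    · exact ⟨_, nrm_tens_single i i, (SRle_one_tens _ _).mono (by omega),
        by simp [hdiag, abs_of_neg hα]⟩
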